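/- Let 𝒟 ⊆ F_2^48 be the span of (1^16 0^32), (0^32 1^16), and all (a,a,a) with a ∈ RM(1,4), and let ξ = (110000001100000001100000011000001010000010100000) ∈ F_2^48. Then 𝒟^0 := {α ∈ 𝒟 : wt(α·ξ) ≡ 0 (mod 4)} is an F_2-linear subcode of 𝒟 of index 2; explicitly, 𝒟^0 is the span of (1^16 0^32), (0^32 1^16), and (a,a,a) for a ∈ {(1111111111111111), (1111000011110000), (1100110011001100), (1010101010101010)}, and 𝒟 ∖ 𝒟^0 = δ + 𝒟^0 where δ = (1111111100000000 1111111100000000 1111111100000000). -/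

import Mathlib

/-- The weight of a binary vector: the number of nonzero coordinates. -/
def wt {n : ℕ} (α : Fin n → ZMod 2) : ℕ :=
  (Finset.univ.filter (fun i => α i ≠ 0)).card

/-- The standard bilinear form `⟨α,β⟩ = ∑ i, α i * β i` on `F_2^n`. -/
def ip {n : ℕ} (α β : Fin n → ZMod 2) : ZMod 2 := ∑ i, α i * β i

/-- The support of a binary vector. -/
def supp {n : ℕ} (α : Fin n → ZMod 2) : Set (Fin n) := {i | α i ≠ 0}

/-- The dual code of a set of vectors. -/
def dualCode {n : ℕ} (S : Set (Fin n → ZMod 2)) : Set (Fin n → ZMod 2) :=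
  {δ | ∀ γ ∈ S, ip δ γ = 0}

/-- The five generators of the first-order Reed–Muller code RM(1,4). -/
def r0 : Fin 16 → ZMod 2 := fun _ => 1
def r1 : Fin 16 → ZMod 2 := fun i => if i.val < 8 then 1 else 0
def r2 : Fin 16 → ZMod 2 := fun i => if i.val % 8 < 4 then 1 else 0
def r3 : Fin 16 → ZMod 2 := fun i => if i.val % 4 < 2 then 1 else 0
def r4 : Fin 16 → ZMod 2 := fun i => if i.val % 2 = 0 then 1 else 0

/-- The first-order Reed–Muller code RM(1,4) ⊆ F_2^16. -/
def RM14 : Submodule (ZMod 2) (Fin 16 → ZMod 2) :=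
  Submodule.span (ZMod 2) {r0, r1, r2, r3, r4}

/-- The triple repetition `(a, a, a)` of a vector of length 16. -/
def tri (a : Fin 16 → ZMod 2) : Fin 48 → ZMod 2 :=
  fun i => a ⟨i.val % 16, Nat.mod_lt _ (by norm_num)⟩

/-- `(1^16 0^32)`. -/
def e1 : Fin 48 → ZMod 2 := fun i => if i.val < 16 then 1 else 0

/-- `(0^32 1^16)`. -/
def e2 : Fin 48 → ZMod 2 := fun i => if 32 ≤ i.val then 1 else 0

/-- The code 𝒟 ⊆ F_2^48, spanned by `(1^16 0^32)`, `(0^32 1^16)` and all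
`(a,a,a)` with `a ∈ RM(1,4)`. -/
def Dcode : Submodule (ZMod 2) (Fin 48 → ZMod 2) :=
  Submodule.span (ZMod 2) ({e1, e2} ∪ tri '' (RM14 : Set (Fin 16 → ZMod 2)))

/-- The `b`-th block of length 16 of a vector of length 48. -/
def blk (x : Fin 48 → ZMod 2) (b : Fin 3) : Fin 16 → ZMod 2 :=
  fun j => x ⟨16 * b.val + j.val, by have hb := b.isLt; have hj := j.isLt; omega⟩

/-- ξ = (1100 0000 1100 0000 | 0110 0000 0110 0000 | 1010 0000 1010 0000) ∈ F_2^48. -/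
def xiv : Fin 48 → ZMod 2 :=
  fun i => if i.val ∈ [0, 1, 8, 9, 17, 18, 25, 26, 32, 34, 40, 42] then 1 else 0

/-!
Since `wt (x + y) = wt x + wt y - 2 wt (x * y)`, the map `α ↦ wt (α * ξ) mod 4` is additive on any
code on which all `wt (α * β * ξ)` are even; for `𝒟` this evenness is bilinear in `(α, β)`, hence
checked on generators. So `𝒟⁰` is a subcode, containing every generator except `(r1, r1, r1)`,
which has `wt = 2` against `ξ`. Thus `𝒟 = 𝒟⁰ ⊕ ⟨δ⟩` with `δ = (r1, r1, r1) ∉ 𝒟⁰`.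
-/

open Submodule (span)

section Weight

variable {n : ℕ}

lemma wt_eq_sum_val (x : Fin n → ZMod 2) : wt x = ∑ i, (x i).val := by
  rw [wt, Finset.card_filter]
  exact Finset.sum_congr rfl fun i _ => by generalize x i = z; revert z; decide

lemma wt_add_add_two_mul_wt_mul (x y : Fin n → ZMod 2) :
    wt (x + y) + 2 * wt (x * y) = wt x + wt y := by
  simp only [wt_eq_sum_val, Finset.mul_sum, ← Finset.sum_add_distrib]
  exact Finset.sum_congr rfl fun i _ => by
    simp only [Pi.add_apply, Pi.mul_apply]
    generalize x i = a; generalize y i = b; revert a b; decide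

lemma even_wt_mul_iff (x ξ : Fin n → ZMod 2) : Even (wt (x * ξ)) ↔ ip x ξ = 0 := by
  simp [← ZMod.natCast_eq_zero_iff_even, wt_eq_sum_val, ip]

lemma natCast_wt_add_mul (ξ α β : Fin n → ZMod 2) (h : Even (wt (α * β * ξ))) :
    (wt ((α + β) * ξ) : ZMod 4) = wt (α * ξ) + wt (β * ξ) := by
  have hξ : ξ * ξ = ξ := funext fun i => by
    simp only [Pi.mul_apply]; generalize ξ i = z; revert z; decide
  have key := congrArg (Nat.cast : ℕ → ZMod 4) (wt_add_add_two_mul_wt_mul (α * ξ) (β * ξ))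
  obtain ⟨k, hk⟩ := h
  rw [mul_mul_mul_comm, hξ, hk, ← add_mul] at key
  have h4 : ((2 * (k + k) : ℕ) : ZMod 4) = 0 := by rw [ZMod.natCast_eq_zero_iff]; omega
  push_cast at key h4 ⊢
  linear_combination key - h4

lemma even_wt_mul_mul_of_mem_span {s : Set (Fin n → ZMod 2)} {ξ : Fin n → ZMod 2}
    (hs : ∀ a ∈ s, ∀ b ∈ s, Even (wt (a * b * ξ))) {α β : Fin n → ZMod 2}
    (hα : α ∈ span (ZMod 2) s) (hβ : β ∈ span (ZMod 2) s) : Even (wt (α * β * ξ)) := by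
  simp only [even_wt_mul_iff, ip, Pi.mul_apply] at hs ⊢
  induction hα, hβ using Submodule.span_induction₂ with
  | mem_mem a b ha hb => exact hs a ha b hb
  | zero_left | zero_right => simp
  | add_left _ _ _ _ _ _ h₁ h₂ | add_right _ _ _ _ _ _ h₁ h₂ =>
    simp only [Pi.add_apply, add_mul, mul_add, Finset.sum_add_distrib, h₁, h₂, add_zero]
  | smul_left r _ _ _ _ h | smul_right r _ _ _ _ h =>
    rw [← mul_zero r, ← h, Finset.mul_sum]
    exact Finset.sum_congr rfl fun i _ => by simp only [Pi.smul_apply, smul_eq_mul]; ring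

end Weight

lemma ZMod.two_eq_zero_or_one (c : ZMod 2) : c = 0 ∨ c = 1 := by
  revert c; decide

/-- Under `hC`, `α ↦ wt (α * ξ) mod 4` is additive on `C` (by `natCast_wt_add_mul`), so its zero
set is a subcode. -/
def kerWtMulModFour {n : ℕ} (C : Submodule (ZMod 2) (Fin n → ZMod 2)) (ξ : Fin n → ZMod 2)
    (hC : ∀ α ∈ C, ∀ β ∈ C, Even (wt (α * β * ξ))) : Submodule (ZMod 2) (Fin n → ZMod 2) where
  carrier := {α | α ∈ C ∧ wt (α * ξ) % 4 = 0}
  add_mem' := by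
    rintro α β ⟨hα, hαξ⟩ ⟨hβ, hβξ⟩
    refine ⟨C.add_mem hα hβ, ?_⟩
    simp only [← Nat.dvd_iff_mod_eq_zero, ← ZMod.natCast_eq_zero_iff] at hαξ hβξ ⊢
    rw [natCast_wt_add_mul _ _ _ (hC α hα β hβ), hαξ, hβξ, add_zero]
  zero_mem' := ⟨C.zero_mem, by simp [wt]⟩
  smul_mem' c α hα := by
    rcases ZMod.two_eq_zero_or_one c with rfl | rfl
    · rw [zero_smul]; exact ⟨C.zero_mem, by simp [wt]⟩
    · rwa [one_smul]

namespace Submodule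

variable {V : Type*} [AddCommGroup V]

lemma eq_of_le_sup_span_singleton {K : Type*} [DivisionRing K] [Module K V]
    {p q : Submodule K V} {t : V} (hp : p ≤ q ⊔ K ∙ t) (hq : q ≤ p) (ht : t ∉ p) : p = q := by
  refine le_antisymm (fun α hα => ?_) hq
  obtain ⟨β, hβ, _, hγ, rfl⟩ := mem_sup.mp (hp hα)
  obtain ⟨c, rfl⟩ := mem_span_singleton.mp hγ
  rcases eq_or_ne c 0 with rfl | hc
  · simpa using hβ
  · have hct : c • t ∈ p := by simpa using p.sub_mem hα (hq hβ)
    exact absurd ((p.smul_mem_iff hc).mp hct) ht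

lemma coe_sup_span_singleton_diff [Module (ZMod 2) V] {p : Submodule (ZMod 2) V} {t : V}
    (ht : t ∉ p) : (↑(p ⊔ ZMod 2 ∙ t) \ ↑p : Set V) = (t + ·) '' p := by
  ext α
  constructor
  · rintro ⟨hα, hαp⟩
    obtain ⟨β, hβ, _, hγ, rfl⟩ := mem_sup.mp hα
    obtain ⟨c, rfl⟩ := mem_span_singleton.mp hγ
    rcases ZMod.two_eq_zero_or_one c with rfl | rfl
    · exact absurd (by simpa using hβ) hαp
    · exact ⟨β, hβ, by rw [one_smul, add_comm]⟩
  · rintro ⟨β, hβ, rfl⟩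
    refine ⟨add_mem (mem_sup_right (mem_span_singleton_self t)) (mem_sup_left hβ), fun h => ?_⟩
    exact ht (by simpa using p.sub_mem h hβ)

lemma span_union_image_span {R M : Type*} [Semiring R] [AddCommMonoid M] [Module R M]
    [Module R V] (A : Set V) (f : M →ₗ[R] V) (S : Set M) :
    span R (A ∪ f '' span R S) = span R (A ∪ f '' S) := by
  rw [span_union, span_union, span_image, span_image, span_span]

end Submodule

def triLin : (Fin 16 → ZMod 2) →ₗ[ZMod 2] (Fin 48 → ZMod 2) :=
  LinearMap.funLeft _ _ fun i => ⟨i.val % 16, Nat.mod_lt _ (by norm_num)⟩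

lemma coe_triLin : ⇑triLin = tri := rfl

lemma Dcode_eq_span : Dcode = span (ZMod 2) ({e1, e2} ∪ tri '' {r0, r1, r2, r3, r4}) := by
  rw [Dcode, RM14, ← coe_triLin, Submodule.span_union_image_span]

lemma Dcode_eq_sup : Dcode =
    span (ZMod 2) ({e1, e2} ∪ tri '' {r0, r2, r3, r4}) ⊔ ZMod 2 ∙ tri r1 := by
  rw [Dcode_eq_span, Set.insert_comm, Set.image_insert_eq, Set.union_insert,
    Submodule.span_insert, sup_comm]

lemma even_wt_mul_mul_xiv : ∀ α ∈ Dcode, ∀ β ∈ Dcode, Even (wt (α * β * xiv)) := by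
  rw [Dcode_eq_span]
  refine fun α hα β hβ => even_wt_mul_mul_of_mem_span ?_ hα hβ
  simp only [Set.image_insert_eq, Set.image_singleton, Set.insert_union, Set.singleton_union,
    Set.mem_insert_iff, Set.mem_singleton_iff, forall_eq_or_imp, forall_eq]
  decide

lemma span_le_kerWtMulModFour :
    span (ZMod 2) ({e1, e2} ∪ tri '' {r0, r2, r3, r4}) ≤
      kerWtMulModFour Dcode xiv even_wt_mul_mul_xiv := by
  refine Submodule.span_le.mpr fun g hg => ⟨?_, ?_⟩
  · rw [Dcode_eq_sup]
    exact Submodule.mem_sup_left (Submodule.subset_span hg)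
  · simp only [Set.image_insert_eq, Set.image_singleton, Set.insert_union, Set.singleton_union,
      Set.mem_insert_iff, Set.mem_singleton_iff] at hg
    rcases hg with rfl | rfl | rfl | rfl | rfl | rfl <;> decide

lemma tri_r1_not_mem_kerWtMulModFour :
    tri r1 ∉ kerWtMulModFour Dcode xiv even_wt_mul_mul_xiv :=
  fun h => absurd h.2 (by decide)

theorem stmt14 :
    {α | α ∈ Dcode ∧ wt (α * xiv) % 4 = 0} =
      (Submodule.span (ZMod 2) ({e1, e2} ∪ tri '' {r0, r2, r3, r4}) :
        Submodule (ZMod 2) (Fin 48 → ZMod 2)) ∧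
    {α | α ∈ Dcode ∧ wt (α * xiv) % 4 ≠ 0} =
      (fun β => tri r1 + β) '' {α | α ∈ Dcode ∧ wt (α * xiv) % 4 = 0} := by
  set K := kerWtMulModFour Dcode xiv even_wt_mul_mul_xiv
  have hK : K = span (ZMod 2) ({e1, e2} ∪ tri '' {r0, r2, r3, r4}) :=
    Submodule.eq_of_le_sup_span_singleton (fun α hα => Dcode_eq_sup ▸ hα.1)
      span_le_kerWtMulModFour tri_r1_not_mem_kerWtMulModFour
  refine ⟨congrArg SetLike.coe hK, ?_⟩
  have hD : Dcode = K ⊔ ZMod 2 ∙ tri r1 := hK ▸ Dcode_eq_sup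
  calc {α | α ∈ Dcode ∧ wt (α * xiv) % 4 ≠ 0}
      = ↑(K ⊔ ZMod 2 ∙ tri r1) \ ↑K := by
        rw [← hD]; ext α; exact and_congr_right fun hα => (and_iff_right hα).not.symm
    _ = _ := Submodule.coe_sup_span_singleton_diff tri_r1_not_mem_kerWtMulModFour
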